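/- Let h > 0, α > 1, β ≥ 0, c_v > 0, and suppose functions v_k : ℝ → ℂ satisfy sup_t |v_k(t)| ≤ c_v e^{-β|k|}/⟨k⟩^α and sup_t |v̇_k(t)| ≤ c_v e^{-β|k|}/⟨k⟩^α. Fix k₀ ∈ ℤ and define A₂(t) = -∫₀ᵗ ∑_{j≠±k₀} v_{k₀-j}(τ) v_{j-k₀}(0) e^{τ(j²-k₀²)/(ih)} / (k₀²-j²) dτ. Then |A₂(t)| ≤ (2+|t|) h c_v² c₁ / ⟨k₀⟩² for an absolute constant c₁ (depending only on α). -/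

import Mathlib

/-!
Integrating by parts against the oscillating factor `e^{τ(j² - k₀²)/(ih)}` gains the factor
`h / |k₀² - j²|`, so the `j`-th term is at most `(2 + |t|) h c_v² / (⟨k₀ - j⟩ (k₀² - j²))²`.
Writing `k₀² - j² = (k₀ - j)(k₀ + j)` with both factors nonzero integers gives
`⟨k₀⟩ |k₀ - j| ≤ ⟨k₀ - j⟩ |k₀² - j²|`, so the term is at most
`(2 + |t|) h c_v² / (⟨k₀⟩² (k₀ - j)²)`, and summing over `j` gives `c₁ = ∑_{n ≠ 0} n⁻²`.
Sum and integral commute by dominated convergence, with dominating series `c_v² ∑ (k₀ - j)⁻²`.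
-/

/-- ⟨k⟩ = |k| + 1 -/
noncomputable def br (k : ℤ) : ℝ := |(k : ℝ)| + 1

open Complex intervalIntegral

lemma one_le_br (k : ℤ) : 1 ≤ br k := le_add_of_nonneg_left (abs_nonneg _)

lemma br_pos (k : ℤ) : 0 < br k := one_pos.trans_le (one_le_br k)

lemma abs_le_br (k : ℤ) : |(k : ℝ)| ≤ br k := le_add_of_nonneg_right zero_le_one

lemma sq_le_br_sq (m : ℤ) : (m : ℝ) ^ 2 ≤ br m ^ 2 := by
  rw [← sq_abs]; exact pow_le_pow_left₀ (abs_nonneg _) (abs_le_br m) 2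

lemma one_le_abs_sq_sub_sq {k j : ℤ} (h₁ : j ≠ k) (h₂ : j ≠ -k) :
    1 ≤ |((k ^ 2 - j ^ 2 : ℤ) : ℝ)| := by
  rw [← Int.cast_abs, sq_sub_sq]
  exact_mod_cast Int.one_le_abs (mul_ne_zero (by omega) (sub_ne_zero.2 h₁.symm))

lemma br_sub_comm (a b : ℤ) : br (a - b) = br (b - a) := by
  simp only [br, Int.cast_sub, abs_sub_comm]

lemma mul_exp_div_rpow_le_div_br {α β c : ℝ} (hα : 1 ≤ α) (hβ : 0 ≤ β) (hc : 0 ≤ c) (m : ℤ) :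
    c * Real.exp (-β * |(m : ℝ)|) / br m ^ α ≤ c / br m := by
  have hexp : Real.exp (-β * |(m : ℝ)|) ≤ 1 :=
    Real.exp_le_one_iff.2 (mul_nonpos_of_nonpos_of_nonneg (neg_nonpos.2 hβ) (abs_nonneg _))
  have hrpow : br m ≤ br m ^ α := Real.self_le_rpow_of_one_le (one_le_br m) hα
  calc c * Real.exp (-β * |(m : ℝ)|) / br m ^ α ≤ c * 1 / br m :=
        div_le_div₀ (by positivity) (mul_le_mul_of_nonneg_left hexp hc) (br_pos m) hrpow
    _ = c / br m := by rw [mul_one]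

lemma br_mul_abs_sub_le {k j : ℤ} (h₁ : j ≠ k) (h₂ : j ≠ -k) :
    br k * |((k - j : ℤ) : ℝ)| ≤ br (k - j) * |((k ^ 2 - j ^ 2 : ℤ) : ℝ)| := by
  have hx : 1 ≤ |((k - j : ℤ) : ℝ)| := by
    rw [← Int.cast_abs]; exact_mod_cast Int.one_le_abs (sub_ne_zero.2 h₁.symm)
  have hy : 1 ≤ |((k + j : ℤ) : ℝ)| := by
    rw [← Int.cast_abs]; exact_mod_cast Int.one_le_abs (by omega)
  set x := |((k - j : ℤ) : ℝ)|
  set y := |((k + j : ℤ) : ℝ)|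
  have hk : 2 * |(k : ℝ)| ≤ x + y := by
    calc 2 * |(k : ℝ)| = |((k - j : ℤ) : ℝ) + ((k + j : ℤ) : ℝ)| := by
          rw [show ((k - j : ℤ) : ℝ) + ((k + j : ℤ) : ℝ) = 2 * k by push_cast; ring, abs_mul,
            abs_two]
      _ ≤ x + y := abs_add_le _ _
  have hbr : br k ≤ br (k - j) * y := by
    rw [br, br]; nlinarith [mul_nonneg (sub_nonneg.2 hx) (sub_nonneg.2 hy)]
  calc br k * x ≤ br (k - j) * y * x := mul_le_mul_of_nonneg_right hbr (by positivity)
    _ = br (k - j) * |((k ^ 2 - j ^ 2 : ℤ) : ℝ)| := by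
      rw [mul_assoc, ← abs_mul]; push_cast; ring_nf

lemma norm_integral_mul_exp_le {f f' : ℝ → ℂ} {B : ℝ} {c : ℂ} (hc : c ≠ 0) (hre : c.re = 0)
    (hf : ∀ x, HasDerivAt f (f' x) x) (hf' : Continuous f') (hB : ∀ x, ‖f x‖ ≤ B)
    (hB' : ∀ x, ‖f' x‖ ≤ B) (t : ℝ) :
    ‖∫ τ in (0 : ℝ)..t, f τ * exp (c * τ)‖ ≤ (2 + |t|) * B / ‖c‖ := by
  have hprim : ∀ x : ℝ, HasDerivAt (fun τ : ℝ => exp (c * τ) / c) (exp (c * x)) x := fun x => by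
    simpa [hc] using (((hasDerivAt_id (x : ℂ)).const_mul c).cexp.comp_ofReal).div_const c
  have hterm : ∀ (z : ℂ) (x : ℝ), ‖z‖ ≤ B → ‖z * (exp (c * x) / c)‖ ≤ B / ‖c‖ := by
    intro z x hz
    rw [norm_mul, norm_div, norm_exp, mul_re, ofReal_re, ofReal_im, hre, zero_mul, mul_zero,
      sub_zero, Real.exp_zero, mul_one_div]
    exact div_le_div_of_nonneg_right hz (norm_nonneg c)
  rw [integral_mul_deriv_eq_deriv_mul (fun x _ => hf x) (fun x _ => hprim x)
    (hf'.intervalIntegrable _ _)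
    ((by fun_prop : Continuous fun τ : ℝ => exp (c * τ)).intervalIntegrable _ _)]
  calc _ ≤ ‖f t * (exp (c * t) / c)‖ + ‖f 0 * (exp (c * (0 : ℝ)) / c)‖
        + ‖∫ τ in (0 : ℝ)..t, f' τ * (exp (c * τ) / c)‖ :=
        (norm_sub_le _ _).trans (add_le_add_left (norm_sub_le _ _) _)
    _ ≤ B / ‖c‖ + B / ‖c‖ + B / ‖c‖ * |t - 0| := by
      gcongr
      exacts [hterm _ _ (hB t), hterm _ _ (hB 0),
        norm_integral_le_of_norm_le_const fun x _ => hterm _ _ (hB' x)]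
    _ = (2 + |t|) * B / ‖c‖ := by rw [sub_zero]; ring

lemma ofReal_mul_intCast_sub_div_I_mul (τ h : ℝ) (m n : ℤ) :
    (τ : ℂ) * ((m - n : ℤ) : ℂ) / (I * h) = (((n - m : ℤ) : ℝ) / h : ℝ) * I * τ := by
  simp only [div_eq_mul_inv, mul_inv, inv_I]
  push_cast
  ring

lemma norm_exp_ofReal_mul_I_mul_ofReal (x τ : ℝ) : ‖exp (x * I * τ)‖ = 1 := by
  rw [norm_exp]; simp

noncomputable def a2Term (v : ℤ → ℝ → ℂ) (h : ℝ) (k₀ j : ℤ) (τ : ℝ) : ℂ :=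
  if j ≠ k₀ ∧ j ≠ -k₀ then
    v (k₀ - j) τ * v (j - k₀) 0 *
      Complex.exp ((τ : ℂ) * ((j ^ 2 - k₀ ^ 2 : ℤ) : ℂ) / (Complex.I * h)) /
      ((k₀ ^ 2 - j ^ 2 : ℤ) : ℂ)
  else 0

section a2Term

variable {v v' : ℤ → ℝ → ℂ} {cv : ℝ}

lemma continuous_a2Term (hv : ∀ m, Continuous (v m)) (h : ℝ) (k₀ j : ℤ) :
    Continuous (a2Term v h k₀ j) := by
  unfold a2Term
  split_ifs
  · have := hv (k₀ - j); fun_prop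
  · exact continuous_const

lemma norm_mul_le_div_br_sq (hv : ∀ m t, ‖v m t‖ ≤ cv / br m) {k₀ j : ℤ} {z : ℂ}
    (hz : ‖z‖ ≤ cv / br (k₀ - j)) : ‖z * v (j - k₀) 0‖ ≤ (cv / br (k₀ - j)) ^ 2 := by
  rw [norm_mul, sq]
  exact mul_le_mul hz (br_sub_comm j k₀ ▸ hv (j - k₀) 0) (norm_nonneg _)
    ((norm_nonneg _).trans hz)

lemma norm_a2Term_le (hv : ∀ m t, ‖v m t‖ ≤ cv / br m) (h : ℝ) (k₀ j : ℤ) (τ : ℝ) :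
    ‖a2Term v h k₀ j τ‖ ≤ cv ^ 2 * (1 / ((k₀ - j : ℤ) : ℝ) ^ 2) := by
  unfold a2Term
  split_ifs with hj
  swap; · simp only [norm_zero]; positivity
  obtain ⟨h₁, h₂⟩ := hj
  have hq := one_le_abs_sq_sub_sq h₁ h₂
  rw [ofReal_mul_intCast_sub_div_I_mul, norm_div, norm_mul, norm_exp_ofReal_mul_I_mul_ofReal,
    mul_one, norm_intCast]
  calc _ ≤ (cv / br (k₀ - j)) ^ 2 / 1 :=
        div_le_div₀ (sq_nonneg _) (norm_mul_le_div_br_sq hv (hv _ _)) one_pos hq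
    _ ≤ cv ^ 2 * (1 / ((k₀ - j : ℤ) : ℝ) ^ 2) := by
      rw [div_one, div_pow, mul_one_div]
      have : ((k₀ - j : ℤ) : ℝ) ≠ 0 := by exact_mod_cast sub_ne_zero.2 h₁.symm
      exact div_le_div_of_nonneg_left (sq_nonneg _) (by positivity) (sq_le_br_sq _)

lemma norm_integral_a2Term_le {h : ℝ} (hh : 0 < h) (hv : ∀ m t, HasDerivAt (v m) (v' m t) t)
    (hv'c : ∀ m, Continuous (v' m)) (hvb : ∀ m t, ‖v m t‖ ≤ cv / br m)
    (hv'b : ∀ m t, ‖v' m t‖ ≤ cv / br m) (k₀ j : ℤ) (t : ℝ) :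
    ‖∫ τ in (0 : ℝ)..t, a2Term v h k₀ j τ‖
      ≤ (2 + |t|) * h * cv ^ 2 / br k₀ ^ 2 * (1 / ((k₀ - j : ℤ) : ℝ) ^ 2) := by
  unfold a2Term
  split_ifs with hj
  swap; · simp only [integral_zero, norm_zero]; positivity
  obtain ⟨h₁, h₂⟩ := hj
  set q : ℝ := ((k₀ ^ 2 - j ^ 2 : ℤ) : ℝ)
  have hq : 0 < |q| := one_pos.trans_le (one_le_abs_sq_sub_sq h₁ h₂)
  set c : ℂ := ((q / h : ℝ) : ℂ) * I
  have hc : ‖c‖ = |q| / h := by simp [c, abs_of_pos hh]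
  have hibp := norm_integral_mul_exp_le (c := c) (by simpa [c] using ⟨abs_pos.1 hq, hh.ne'⟩)
    (by simp [c]) (fun x => (hv (k₀ - j) x).mul_const (v (j - k₀) 0))
    ((hv'c (k₀ - j)).mul continuous_const) (fun x => norm_mul_le_div_br_sq hvb (hvb _ x))
    (fun x => norm_mul_le_div_br_sq hvb (hv'b _ x)) t
  simp_rw [ofReal_mul_intCast_sub_div_I_mul, integral_div, norm_div, norm_intCast]
  calc _ ≤ (2 + |t|) * (cv / br (k₀ - j)) ^ 2 / ‖c‖ / |q| := by gcongr
    _ = (2 + |t|) * h * cv ^ 2 / (br (k₀ - j) * |q|) ^ 2 := by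
      rw [hc]; field_simp
    _ ≤ (2 + |t|) * h * cv ^ 2 / (br k₀ * |((k₀ - j : ℤ) : ℝ)|) ^ 2 := by
      have := br_pos k₀
      exact div_le_div_of_nonneg_left (by positivity) (by positivity)
        (pow_le_pow_left₀ (by positivity) (br_mul_abs_sub_le h₁ h₂) 2)
    _ = _ := by rw [mul_pow, sq_abs]; field_simp

end a2Term

lemma norm_intervalIntegral_tsum_le {ι E : Type*} [Countable ι] [NormedAddCommGroup E]
    [NormedSpace ℝ E] [CompleteSpace E] {g : ι → ℝ → E} {w : ι → ℝ} {s M C a b : ℝ}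
    (hg : ∀ i, Continuous (g i)) (hw : HasSum w s) (hM : ∀ i x, ‖g i x‖ ≤ M * w i)
    (hC : ∀ i, ‖∫ x in a..b, g i x‖ ≤ C * w i) :
    ‖∫ x in a..b, ∑' i, g i x‖ ≤ C * s := by
  have hMw : Summable fun i => M * w i := hw.summable.mul_left M
  have hsum : HasSum (fun i => ∫ x in a..b, g i x) (∫ x in a..b, ∑' i, g i x) :=
    hasSum_integral_of_dominated_convergence (fun i _ => M * w i)
      (fun i => (hg i).aestronglyMeasurable) (fun i => .of_forall fun x _ => hM i x)
      (.of_forall fun _ _ => hMw) intervalIntegrable_const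
      (.of_forall fun x _ => (hMw.of_norm_bounded (hM · x)).hasSum)
  exact hsum.norm_le_of_bounded (hw.mul_left C) hC

theorem A2_bound (α : ℝ) (hα : 1 < α) :
    ∃ c₁ : ℝ, 0 < c₁ ∧
      ∀ (h cv β : ℝ), 0 < h → 0 < cv → 0 ≤ β →
      ∀ v v' : ℤ → ℝ → ℂ,
        (∀ m t, HasDerivAt (v m) (v' m t) t) →
        (∀ m, Continuous (v' m)) →
        (∀ t, v 0 t = 0) →
        (∀ m t, ‖v m t‖ ≤ cv * Real.exp (-β * |(m : ℝ)|) / br m ^ α) →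
        (∀ m t, ‖v' m t‖ ≤ cv * Real.exp (-β * |(m : ℝ)|) / br m ^ α) →
      ∀ (k₀ : ℤ) (t : ℝ),
        ‖-∫ τ in (0 : ℝ)..t,
            ∑' j : ℤ, if j ≠ k₀ ∧ j ≠ -k₀ then
                v (k₀ - j) τ * v (j - k₀) 0 *
                  Complex.exp ((τ : ℂ) * ((j ^ 2 - k₀ ^ 2 : ℤ) : ℂ) / (Complex.I * h)) /
                  ((k₀ ^ 2 - j ^ 2 : ℤ) : ℂ)
              else 0‖
          ≤ (2 + |t|) * h * cv ^ 2 * c₁ / br k₀ ^ 2 := by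
  have hsum : Summable fun n : ℤ => 1 / (n : ℝ) ^ 2 := Real.summable_one_div_int_pow.2 one_lt_two
  -- the `n = 0` term is `1 / 0 = 0`
  refine ⟨∑' n : ℤ, 1 / (n : ℝ) ^ 2, hsum.tsum_pos (fun n => by positivity) 1 (by norm_num), ?_⟩
  intro h cv β hh hcv hβ v v' hv hv'c _ hvb hv'b k₀ t
  have hdecay := mul_exp_div_rpow_le_div_br hα.le hβ hcv.le
  have hvb₁ : ∀ m t, ‖v m t‖ ≤ cv / br m := fun m t => (hvb m t).trans (hdecay m)
  have hv'b₁ : ∀ m t, ‖v' m t‖ ≤ cv / br m := fun m t => (hv'b m t).trans (hdecay m)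
  have hw : HasSum (fun j : ℤ => 1 / ((k₀ - j : ℤ) : ℝ) ^ 2) (∑' n : ℤ, 1 / (n : ℝ) ^ 2) :=
    (Equiv.subLeft k₀).hasSum_iff (f := fun n : ℤ => 1 / (n : ℝ) ^ 2) |>.2 hsum.hasSum
  rw [norm_neg, mul_div_right_comm]
  exact norm_intervalIntegral_tsum_le
    (continuous_a2Term (fun m => continuous_iff_continuousAt.2 fun x => (hv m x).continuousAt) h k₀)
    hw (norm_a2Term_le hvb₁ h k₀) fun j => norm_integral_a2Term_le hh hv hv'c hvb₁ hv'b₁ k₀ j t
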